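/- arXiv:2211.00140 — 6 statements merged into one kernel-verified Lean document; each statement's English description precedes it below -/
import Mathlib

section
/- Define η_t = 3/(t+3) and A_t = 6/((t+1)(t+2)(t+3)). Then for every k ≥ 1, the sum ∑_{t=0}^{k} (A_k·η_t³)/A_t ≤ 27·(k+1)/(k+3)³. -/
/-!
Up to the factor `A k`, the `t`-th summand is `η t ^ 3 / A t = 9/2 · (t+1)(t+2)/(t+3)²`, which
increases with `t`. Hence each of the `k + 1` summands is at most the last one,
`A k * η k ^ 3 / A k = 27 / (k+3)³`.
-/

lemma monotoneOn_add_one_mul_add_two_div_add_three_sq :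
    MonotoneOn (fun x : ℝ => (x + 1) * (x + 2) / (x + 3) ^ 2) (Set.Ici 0) := by
  intro s (hs : 0 ≤ s) t _ hst
  rw [div_le_div_iff₀ (by nlinarith) (by nlinarith)]
  nlinarith [mul_nonneg (sub_nonneg.2 hst) (mul_nonneg hs hs),
    mul_nonneg (sub_nonneg.2 hst) (mul_nonneg hs (hs.trans hst)),
    mul_nonneg (sub_nonneg.2 hst) hs, mul_nonneg (sub_nonneg.2 hst) (hs.trans hst)]

theorem sum_bound (η A : ℕ → ℝ) (hη : ∀ t, η t = 3 / ((t : ℝ) + 3))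
    (hA : ∀ t, A t = 6 / (((t : ℝ) + 1) * ((t : ℝ) + 2) * ((t : ℝ) + 3))) :
    ∀ k : ℕ, 1 ≤ k →
      ∑ t ∈ Finset.range (k + 1), A k * (η t) ^ 3 / A t ≤
        27 * ((k : ℝ) + 1) / ((k : ℝ) + 3) ^ 3 := by
  intro k _
  have hA_pos : ∀ t, 0 < A t := fun t => by rw [hA]; positivity
  have h_ratio : ∀ t : ℕ, η t ^ 3 / A t = 9 / 2 * ((t + 1) * (t + 2) / ((t : ℝ) + 3) ^ 2) :=
    fun t => by rw [hη, hA]; field_simp; ring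
  have h_summand : ∀ t ∈ Finset.range (k + 1), A k * η t ^ 3 / A t ≤ 27 / ((k : ℝ) + 3) ^ 3 := by
    intro t ht
    calc A k * η t ^ 3 / A t = A k * (η t ^ 3 / A t) := mul_div_assoc _ _ _
      _ ≤ A k * (η k ^ 3 / A k) := by
          rw [h_ratio, h_ratio]
          gcongr ?_ * (9 / 2 * ?_)
          · exact (hA_pos k).le
          · exact monotoneOn_add_one_mul_add_two_div_add_three_sq (Nat.cast_nonneg (α := ℝ) t)
              (Nat.cast_nonneg (α := ℝ) k) (Nat.cast_le.2 (Nat.lt_succ_iff.1 (Finset.mem_range.1 ht)))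
      _ = 27 / ((k : ℝ) + 3) ^ 3 := by
          rw [mul_div_cancel₀ _ (hA_pos k).ne', hη, div_pow]; norm_num
  calc ∑ t ∈ Finset.range (k + 1), A k * η t ^ 3 / A t
      ≤ (Finset.range (k + 1)).card • (27 / ((k : ℝ) + 3) ^ 3) :=
        Finset.sum_le_card_nsmul _ _ _ h_summand
    _ = 27 * ((k : ℝ) + 1) / ((k : ℝ) + 3) ^ 3 := by
        rw [Finset.card_range, nsmul_eq_mul]; push_cast; ring
end

section
/- Let f : ℝᵈ → ℝ be C² and semi-strongly self-concordant with constant L ≥ 0, i.e., ‖∇²f(y) − ∇²f(x)‖_op,x ≤ L·‖y−x‖_x for all x, y, where ‖·‖_x is the local norm ‖h‖_x = ⟨∇²f(x)h, h⟩^{1/2} and ‖·‖_op,x the corresponding operator norm. Then for all x, y: |f(y) − f(x) − ⟨∇f(x), y−x⟩ − (1/2)⟨∇²f(x)(y−x), y−x⟩| ≤ (L/6)·‖y−x‖_x³. -/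
/-!
Restrict `f` to the segment, `g t = f (x + t • (y - x))`. Self-concordance bounds
`|g'' t - g'' 0|` by `L ‖y - x‖ₓ³ t`; integrating this twice from `0` (by the fencing form of the
mean value inequality) bounds the second-order Taylor remainder of `g` at `1` by `L ‖y - x‖ₓ³ / 6`.
-/

open RealInnerProductSpace Set

theorem abs_taylor_remainder_two_le_of_abs_deriv_two_sub_le {g g' g'' : ℝ → ℝ} {K : ℝ}
    (hg : ∀ t, HasDerivAt g (g' t) t) (hg' : ∀ t, HasDerivAt g' (g'' t) t)
    (hK : ∀ t ∈ Ico (0 : ℝ) 1, |g'' t - g'' 0| ≤ K * t) :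
    ∀ t ∈ Icc (0 : ℝ) 1, |g t - g 0 - t * g' 0 - t ^ 2 / 2 * g'' 0| ≤ K * t ^ 3 / 6 := by
  have hquad : ∀ t, HasDerivAt (fun t : ℝ => K * t ^ 2 / 2) (K * t) t := fun t =>
    (((hasDerivAt_pow 2 t).const_mul K).div_const 2).congr_deriv (by push_cast; ring)
  have hcubic : ∀ t, HasDerivAt (fun t : ℝ => K * t ^ 3 / 6) (K * t ^ 2 / 2) t := fun t =>
    (((hasDerivAt_pow 3 t).const_mul K).div_const 6).congr_deriv (by push_cast; ring)
  have hfirst : ∀ t ∈ Icc (0 : ℝ) 1, |g' t - g' 0 - t * g'' 0| ≤ K * t ^ 2 / 2 := by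
    have hderiv : ∀ t, HasDerivAt (fun t => g' t - g' 0 - t * g'' 0) (g'' t - g'' 0) t :=
      fun t => (((hg' t).sub_const (g' 0)).sub ((hasDerivAt_id t).mul_const (g'' 0))).congr_deriv
        (by ring)
    exact image_norm_le_of_norm_deriv_right_le_deriv_boundary
      (fun t _ => (hderiv t).continuousAt.continuousWithinAt)
      (fun t _ => (hderiv t).hasDerivWithinAt) (by simp) hquad hK
  have hderiv : ∀ t, HasDerivAt (fun t => g t - g 0 - t * g' 0 - t ^ 2 / 2 * g'' 0)
      (g' t - g' 0 - t * g'' 0) t := fun t =>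
    (((hg t).sub_const (g 0)).sub ((hasDerivAt_id t).mul_const (g' 0))).sub
      (((hasDerivAt_pow 2 t).div_const 2).mul_const (g'' 0)) |>.congr_deriv (by push_cast; ring)
  exact image_norm_le_of_norm_deriv_right_le_deriv_boundary
    (fun t _ => (hderiv t).continuousAt.continuousWithinAt)
    (fun t _ => (hderiv t).hasDerivWithinAt) (by simp) hcubic
    (fun t ht => hfirst t (Ico_subset_Icc_self ht))

theorem hasDerivAt_add_smul {E : Type*} [NormedAddCommGroup E] [NormedSpace ℝ E] (x v : E)
    (t : ℝ) : HasDerivAt (fun t : ℝ => x + t • v) v t := by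
  simpa using ((hasDerivAt_id t).smul_const v).const_add x

section LineRestriction

variable {E : Type*} [NormedAddCommGroup E] [InnerProductSpace ℝ E] [CompleteSpace E]
  {f : E → ℝ} (x v : E) (t : ℝ)

theorem hasDerivAt_comp_add_smul (hf : DifferentiableAt ℝ f (x + t • v)) :
    HasDerivAt (fun t : ℝ => f (x + t • v)) ⟪gradient f (x + t • v), v⟫ t :=
  (hf.hasGradientAt.hasFDerivAt.comp_hasDerivAt t (hasDerivAt_add_smul x v t) :)

theorem hasDerivAt_inner_gradient_comp_add_smul {hess : E → E →L[ℝ] E}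
    (hhess : HasFDerivAt (gradient f) (hess (x + t • v)) (x + t • v)) :
    HasDerivAt (fun t : ℝ => ⟪gradient f (x + t • v), v⟫) ⟪hess (x + t • v) v, v⟫ t := by
  simpa using (hhess.comp_hasDerivAt t (hasDerivAt_add_smul x v t)).inner ℝ (hasDerivAt_const t v)

end LineRestriction

theorem abs_inner_hess_add_smul_sub_le {E : Type*} [NormedAddCommGroup E]
    [InnerProductSpace ℝ E] {hess : E → E →L[ℝ] E} {L : ℝ}
    (hssc : ∀ x y u v, |⟪(hess y - hess x) u, v⟫| ≤
      L * Real.sqrt ⟪hess x (y - x), y - x⟫ *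
        (Real.sqrt ⟪hess x u, u⟫ * Real.sqrt ⟪hess x v, v⟫))
    (x v : E) {t : ℝ} (ht : 0 ≤ t) :
    |⟪hess (x + t • v) v, v⟫ - ⟪hess x v, v⟫| ≤ L * Real.sqrt ⟪hess x v, v⟫ ^ 3 * t := by
  have hscale : Real.sqrt ⟪hess x (t • v), t • v⟫ = t * Real.sqrt ⟪hess x v, v⟫ := by
    rw [map_smul, real_inner_smul_left, real_inner_smul_right, ← mul_assoc, ← sq,
      Real.sqrt_mul (sq_nonneg t), Real.sqrt_sq ht]
  calc |⟪hess (x + t • v) v, v⟫ - ⟪hess x v, v⟫|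
      = |⟪(hess (x + t • v) - hess x) v, v⟫| := by
        rw [sub_apply, inner_sub_left]
    _ ≤ L * Real.sqrt ⟪hess x (t • v), t • v⟫ *
          (Real.sqrt ⟪hess x v, v⟫ * Real.sqrt ⟪hess x v, v⟫) := by
        simpa using hssc x (x + t • v) v v
    _ = L * Real.sqrt ⟪hess x v, v⟫ ^ 3 * t := by rw [hscale]; ring

theorem taylor_bound_semi_strong_self_concordant_general {d : ℕ}
    (f : EuclideanSpace ℝ (Fin d) → ℝ)
    (hess : EuclideanSpace ℝ (Fin d) → EuclideanSpace ℝ (Fin d) →L[ℝ] EuclideanSpace ℝ (Fin d))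
    (L : ℝ)
    (hf : ContDiff ℝ 2 f)
    (hhess : ∀ x, HasFDerivAt (gradient f) (hess x) x)
    -- semi-strong self-concordance: operator norm (induced by the local norm) bound,
    -- stated equivalently as a bilinear-form bound
    (hssc : ∀ x y u v, |⟪(hess y - hess x) u, v⟫| ≤
      L * Real.sqrt ⟪hess x (y - x), y - x⟫ *
        (Real.sqrt ⟪hess x u, u⟫ * Real.sqrt ⟪hess x v, v⟫)) :
    ∀ x y, |f y - f x - ⟪gradient f x, y - x⟫ - 1 / 2 * ⟪hess x (y - x), y - x⟫| ≤
      L / 6 * Real.sqrt ⟪hess x (y - x), y - x⟫ ^ 3 := by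
  intro x y
  have hdiff : Differentiable ℝ f := hf.differentiable (by norm_num)
  have hremainder := abs_taylor_remainder_two_le_of_abs_deriv_two_sub_le
    (K := L * Real.sqrt ⟪hess x (y - x), y - x⟫ ^ 3)
    (fun t => hasDerivAt_comp_add_smul x (y - x) t (hdiff _))
    (fun t => hasDerivAt_inner_gradient_comp_add_smul x (y - x) t (hhess _))
    (fun t ht => by simpa using abs_inner_hess_add_smul_sub_le hssc x (y - x) ht.1)
    1 (right_mem_Icc.2 zero_le_one)
  simpa [div_mul_eq_mul_div, mul_comm] using hremainder

theorem taylor_bound_semi_strong_self_concordant {d : ℕ}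
    (f : EuclideanSpace ℝ (Fin d) → ℝ)
    (hess : EuclideanSpace ℝ (Fin d) → EuclideanSpace ℝ (Fin d) →L[ℝ] EuclideanSpace ℝ (Fin d))
    (L : ℝ) (hL : 0 ≤ L)
    (hf : ContDiff ℝ 2 f)
    (hhess : ∀ x, HasFDerivAt (gradient f) (hess x) x)
    -- semi-strong self-concordance: operator norm (induced by the local norm) bound,
    -- stated equivalently as a bilinear-form bound
    (hssc : ∀ x y u v, |⟪(hess y - hess x) u, v⟫| ≤
      L * Real.sqrt ⟪hess x (y - x), y - x⟫ *
        (Real.sqrt ⟪hess x u, u⟫ * Real.sqrt ⟪hess x v, v⟫)) :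
    ∀ x y, |f y - f x - ⟪gradient f x, y - x⟫ - 1 / 2 * ⟪hess x (y - x), y - x⟫| ≤
      L / 6 * Real.sqrt ⟪hess x (y - x), y - x⟫ ^ 3 :=
  taylor_bound_semi_strong_self_concordant_general f hess L hf hhess hssc
end

section
/- Let f : ℝᵈ → ℝ be C² and semi-strongly self-concordant with constant L. Then for all x, y: ‖∇f(y) − ∇f(x) − ∇²f(x)(y−x)‖*_x ≤ (L/2)·‖y−x‖_x², where ‖g‖*_x = ⟨g, ∇²f(x)⁻¹ g⟩^{1/2} is the dual local norm (assuming ∇²f(x) positive definite). -/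
/-!
Write `u = y - x` and `w = ∇²f(x)⁻¹ r` for the Taylor remainder `r`, so that `‖r‖*_x² = ⟨r, w⟩`.
Along the segment, `⟨r, w⟩ = ∫₀¹ ⟨(∇²f(x + t u) - ∇²f(x)) u, w⟩ dt`, and self-concordance bounds
the integrand by `L t ‖u‖_x² ‖w‖_x`; hence `‖w‖_x² ≤ (L/2) ‖u‖_x² ‖w‖_x`, and `‖w‖_x = ‖r‖*_x`.
-/

open RealInnerProductSpace

theorem Real.sqrt_le_of_le_mul_sqrt {s C : ℝ} (hC : 0 ≤ C) (h : s ≤ C * √s) : √s ≤ C := by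
  rcases le_or_gt s 0 with hs | hs
  · rw [Real.sqrt_eq_zero'.mpr hs]
    exact hC
  · have hpos : 0 < √s := Real.sqrt_pos.mpr hs
    refine le_of_mul_le_mul_right ?_ hpos
    rwa [Real.mul_self_sqrt hs.le]

theorem sub_le_half_mul_sq_of_hasDerivAt_le_mul {φ φ' : ℝ → ℝ} {C t : ℝ}
    (hφ : ∀ s, HasDerivAt φ (φ' s) s) (hφ' : ∀ s, 0 ≤ s → φ' s ≤ C * s) (ht : 0 ≤ t) :
    φ t - φ 0 ≤ C / 2 * t ^ 2 := by
  have hψ : ∀ s, HasDerivAt (fun s => C / 2 * s ^ 2 - φ s) (C * s - φ' s) s := fun s =>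
    (((hasDerivAt_pow 2 s).const_mul (C / 2)).fun_sub (hφ s)).congr_deriv (by norm_num; ring)
  have hmono : MonotoneOn (fun s => C / 2 * s ^ 2 - φ s) (Set.Ici 0) := by
    refine monotoneOn_of_deriv_nonneg (convex_Ici 0)
      (fun s _ => (hψ s).continuousAt.continuousWithinAt)
      (fun s _ => (hψ s).differentiableAt.differentiableWithinAt) fun s hs => ?_
    rw [interior_Ici] at hs
    rw [(hψ s).deriv, sub_nonneg]
    exact hφ' s hs.le
  have := hmono Set.self_mem_Ici ht ht
  simp only at this
  linarith

section SelfConcordance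

variable {E : Type*} [NormedAddCommGroup E] [InnerProductSpace ℝ E]

def SemiStronglySelfConcordant (H : E → E →L[ℝ] E) (L : ℝ) : Prop :=
  ∀ x y u v, |⟪(H y - H x) u, v⟫| ≤
    L * √⟪H x (y - x), y - x⟫ * (√⟪H x u, u⟫ * √⟪H x v, v⟫)

theorem sqrt_inner_smul_self {A : E →L[ℝ] E} {t : ℝ} (ht : 0 ≤ t) (u : E) :
    √⟪A (t • u), t • u⟫ = t * √⟪A u, u⟫ := by
  rw [map_smul, real_inner_smul_left, real_inner_smul_right, ← mul_assoc, ← sq,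
    Real.sqrt_mul (sq_nonneg t), Real.sqrt_sq ht]

theorem SemiStronglySelfConcordant.inner_apply_add_smul_sub_le {H : E → E →L[ℝ] E} {L : ℝ}
    (hH : SemiStronglySelfConcordant H L) (x u w : E) {t : ℝ} (ht : 0 ≤ t) :
    ⟪H (x + t • u) u, w⟫ - ⟪H x u, w⟫ ≤ L * √⟪H x u, u⟫ ^ 2 * √⟪H x w, w⟫ * t := by
  have h := (abs_le.mp (hH x (x + t • u) u w)).2
  rw [add_sub_cancel_left, sqrt_inner_smul_self ht, sub_apply, inner_sub_left] at h
  linarith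

theorem SemiStronglySelfConcordant.inner_taylor_remainder_le {G : E → E}
    {H : E → E →L[ℝ] E} {L : ℝ} (hG : ∀ z, HasFDerivAt G (H z) z)
    (hH : SemiStronglySelfConcordant H L) (x y w : E) :
    ⟪G y - G x - H x (y - x), w⟫ ≤ L / 2 * √⟪H x (y - x), y - x⟫ ^ 2 * √⟪H x w, w⟫ := by
  set u := y - x
  have hline : ∀ t : ℝ, HasDerivAt (fun t : ℝ => x + t • u) u t := fun t => by
    simpa using ((hasDerivAt_id t).smul_const u).const_add x
  have hφ : ∀ t : ℝ, HasDerivAt (fun t : ℝ => ⟪G (x + t • u), w⟫ - t * ⟪H x u, w⟫)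
      (⟪H (x + t • u) u, w⟫ - ⟪H x u, w⟫) t := fun t => by
    simpa using (((hG _).comp_hasDerivAt t (hline t)).inner ℝ (hasDerivAt_const t w)).fun_sub
      ((hasDerivAt_id t).mul_const ⟪H x u, w⟫)
  have h := sub_le_half_mul_sq_of_hasDerivAt_le_mul hφ (fun _ => hH.inner_apply_add_smul_sub_le x u w)
    zero_le_one
  have hy : x + u = y := add_sub_cancel x y
  simp only [one_smul, zero_smul, add_zero, one_mul, zero_mul, sub_zero, one_pow, mul_one,
    hy] at h
  rw [inner_sub_left, inner_sub_left]
  linarith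

theorem sqrt_inner_apply_le_of_forall_inner_le {A B : E →L[ℝ] E}
    (hAB : A.comp B = ContinuousLinearMap.id ℝ E) {g : E} {C : ℝ} (hC : 0 ≤ C)
    (hg : ∀ w, ⟪g, w⟫ ≤ C * √⟪A w, w⟫) : √⟪g, B g⟫ ≤ C := by
  have hABg : A (B g) = g := congrArg (· g) hAB
  refine Real.sqrt_le_of_le_mul_sqrt hC ?_
  simpa only [hABg] using hg (B g)

end SelfConcordance

theorem gradient_approx_bound_semi_strong_self_concordant_general {d : ℕ}
    (f : EuclideanSpace ℝ (Fin d) → ℝ)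
    (hess hessinv : EuclideanSpace ℝ (Fin d) →
      EuclideanSpace ℝ (Fin d) →L[ℝ] EuclideanSpace ℝ (Fin d))
    (L : ℝ) (hL : 0 ≤ L)
    (hhess : ∀ x, HasFDerivAt (gradient f) (hess x) x)
    -- hessinv x is the inverse of hess x
    (hinv : ∀ x, (hess x).comp (hessinv x) = ContinuousLinearMap.id ℝ _ ∧
      (hessinv x).comp (hess x) = ContinuousLinearMap.id ℝ _)
    -- semi-strong self-concordance (operator-norm form, as a bilinear bound)
    (hssc : ∀ x y u v, |⟪(hess y - hess x) u, v⟫| ≤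
      L * Real.sqrt ⟪hess x (y - x), y - x⟫ *
        (Real.sqrt ⟪hess x u, u⟫ * Real.sqrt ⟪hess x v, v⟫)) :
    ∀ x y,
      Real.sqrt ⟪gradient f y - gradient f x - hess x (y - x),
          hessinv x (gradient f y - gradient f x - hess x (y - x))⟫ ≤
        L / 2 * Real.sqrt ⟪hess x (y - x), y - x⟫ ^ 2 := by
  intro x y
  exact sqrt_inner_apply_le_of_forall_inner_le (hinv x).1 (by positivity)
    (SemiStronglySelfConcordant.inner_taylor_remainder_le hhess hssc x y)

theorem gradient_approx_bound_semi_strong_self_concordant {d : ℕ}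
    (f : EuclideanSpace ℝ (Fin d) → ℝ)
    (hess hessinv : EuclideanSpace ℝ (Fin d) →
      EuclideanSpace ℝ (Fin d) →L[ℝ] EuclideanSpace ℝ (Fin d))
    (L : ℝ) (hL : 0 ≤ L)
    (hf : ContDiff ℝ 2 f)
    (hhess : ∀ x, HasFDerivAt (gradient f) (hess x) x)
    -- positive definiteness of the Hessians
    (hpd : ∀ x v, v ≠ 0 → 0 < ⟪hess x v, v⟫)
    -- hessinv x is the inverse of hess x
    (hinv : ∀ x, (hess x).comp (hessinv x) = ContinuousLinearMap.id ℝ _ ∧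
      (hessinv x).comp (hess x) = ContinuousLinearMap.id ℝ _)
    -- semi-strong self-concordance (operator-norm form, as a bilinear bound)
    (hssc : ∀ x y u v, |⟪(hess y - hess x) u, v⟫| ≤
      L * Real.sqrt ⟪hess x (y - x), y - x⟫ *
        (Real.sqrt ⟪hess x u, u⟫ * Real.sqrt ⟪hess x v, v⟫)) :
    ∀ x y,
      Real.sqrt ⟪gradient f y - gradient f x - hess x (y - x),
          hessinv x (gradient f y - gradient f x - hess x (y - x))⟫ ≤
        L / 2 * Real.sqrt ⟪hess x (y - x), y - x⟫ ^ 2 :=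
  gradient_approx_bound_semi_strong_self_concordant_general f hess hessinv L hL hhess hinv hssc
end

section
/- Suppose f is μ-strongly convex and its Hessian is L₂-Lipschitz continuous with respect to the Euclidean norm (‖∇²f(x) − ∇²f(y)‖₂ ≤ L₂‖x−y‖₂). Then f is strongly self-concordant with constant L₂/μ^{3/2}, i.e., ∇²f(y) − ∇²f(x) ⪯ (L₂/μ^{3/2})·‖y−x‖_z·∇²f(w) for all x, y, z, w. -/
open RealInnerProductSpace

theorem strong_self_concordance_from_lipschitz_hessian {d : ℕ}
    (f : EuclideanSpace ℝ (Fin d) → ℝ)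
    (hess : EuclideanSpace ℝ (Fin d) → EuclideanSpace ℝ (Fin d) →L[ℝ] EuclideanSpace ℝ (Fin d))
    (μ L₂ : ℝ) (hμ : 0 < μ) (hL₂ : 0 ≤ L₂)
    (hf : ContDiff ℝ 2 f)
    (hhess : ∀ x, HasFDerivAt (gradient f) (hess x) x)
    -- μ-strong convexity: ∇²f ⪰ μ I
    (hsc : ∀ x v, μ * ‖v‖ ^ 2 ≤ ⟪hess x v, v⟫)
    -- L₂-Lipschitz continuity of the Hessian in the Euclidean operator norm
    (hlip : ∀ x y, ‖hess x - hess y‖ ≤ L₂ * ‖x - y‖) :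
    -- strong self-concordance with constant L₂ / μ^{3/2}
    ∀ x y z w v, ⟪(hess y - hess x) v, v⟫ ≤
      L₂ / μ ^ ((3 : ℝ) / 2) * Real.sqrt ⟪hess z (y - x), y - x⟫ * ⟪hess w v, v⟫ := by
  intro x y z w v
  have hμ' : (0:ℝ) < Real.sqrt μ := Real.sqrt_pos.mpr hμ
  set S : ℝ := ⟪hess z (y - x), y - x⟫ with hS
  set Q : ℝ := ⟪hess w v, v⟫ with hQ
  have hQnn : μ * ‖v‖ ^ 2 ≤ Q := hsc w v
  have hQ0 : 0 ≤ Q := le_trans (by positivity) hQnn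
  have hSnn : μ * ‖y - x‖ ^ 2 ≤ S := hsc z (y - x)
  have hS0 : 0 ≤ S := le_trans (by positivity) hSnn
  -- sqrt μ * ‖y - x‖ ≤ sqrt S
  have hsqrt : Real.sqrt μ * ‖y - x‖ ≤ Real.sqrt S := by
    rw [← Real.sqrt_sq (norm_nonneg (y - x)), ← Real.sqrt_mul hμ.le]
    exact Real.sqrt_le_sqrt hSnn
  -- step 1
  have h1 : ⟪(hess y - hess x) v, v⟫ ≤ L₂ * ‖y - x‖ * ‖v‖ ^ 2 := by
    calc ⟪(hess y - hess x) v, v⟫ ≤ ‖(hess y - hess x) v‖ * ‖v‖ :=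
          real_inner_le_norm _ _
      _ ≤ (‖hess y - hess x‖ * ‖v‖) * ‖v‖ := by
          gcongr
          exact (hess y - hess x).le_opNorm v
      _ ≤ (L₂ * ‖y - x‖ * ‖v‖) * ‖v‖ := by
          gcongr
          exact hlip y x
      _ = L₂ * ‖y - x‖ * ‖v‖ ^ 2 := by ring
  -- rewrite μ^(3/2)
  have hpow : μ ^ ((3:ℝ)/2) = μ * Real.sqrt μ := by
    rw [show (3:ℝ)/2 = 1 + 1/2 by ring, Real.rpow_add hμ, Real.rpow_one,
      ← Real.sqrt_eq_rpow]
  have key : L₂ * ‖y - x‖ * ‖v‖ ^ 2 ≤ L₂ / μ ^ ((3:ℝ)/2) * Real.sqrt S * Q := by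
    rw [hpow]
    rw [div_mul_eq_mul_div, div_mul_eq_mul_div, le_div_iff₀ (by positivity)]
    calc L₂ * ‖y - x‖ * ‖v‖ ^ 2 * (μ * Real.sqrt μ)
        = L₂ * (Real.sqrt μ * ‖y - x‖) * (μ * ‖v‖ ^ 2) := by ring
      _ ≤ L₂ * Real.sqrt S * Q := by gcongr
  exact h1.trans key
end

section
/- Let f be convex and C² satisfying for all x, h: f(x+h) − f(x) ≤ ⟨∇f(x), h⟩ + (1/2)‖h‖_x² + (L/6)‖h‖_x³, with positive definite Hessians. Let x⁺ = x − α∇²f(x)⁻¹∇f(x) with α = (−1+√(1+2G))/G, G = L·g, g = ‖∇f(x)‖*_x > 0. Then f(x⁺) − f(x) ≤ −(α g²)·(1 − α/2 − (G/6)α²) ≤ −(1/2)·g²/max(√G, 2). In particular, if g ≥ 4/L then f(x⁺) − f(x) ≤ −g^{3/2}/(2√L), and if g ≤ 4/L then f(x⁺) − f(x) ≤ −g²/4. -/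
/-!
The step size `α` is the positive root of `G/2 · t² + t = 1`, i.e. the minimiser of the cubic
model `t ↦ -t g² + t² g²/2 + L g³ t³/6` along the Newton direction `-∇²f(x)⁻¹∇f(x)`, whose local
norm is `g`. Plugging `x⁺` into the cubic upper bound gives the first estimate. Using the root
equation, the bracket `α(1 - α/2 - Gα²/6)` equals `α(4 - α)/6 ≥ α/2`, and `α · max(√G, 2) ≥ 1`
(`α ≥ 1/2` when `G ≤ 4`, `Gα² ≥ 1` when `G ≥ 4`), which gives the second one; the last two are
its specialisations to the regimes `G ≥ 4` and `G ≤ 4`.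
-/

open RealInnerProductSpace

noncomputable def aicnStepSize (G : ℝ) : ℝ := (-1 + √(1 + 2 * G)) / G

section StepSize

variable {G α : ℝ}

lemma aicnStepSize_pos (hG : 0 < G) : 0 < aicnStepSize G := by
  have hsqrt : 1 < √(1 + 2 * G) := Real.lt_sqrt_of_sq_lt (by linarith)
  exact div_pos (by linarith) hG

lemma aicnStepSize_root (hG : 0 < G) : G / 2 * aicnStepSize G ^ 2 + aicnStepSize G = 1 := by
  have hsq : √(1 + 2 * G) ^ 2 = 1 + 2 * G := Real.sq_sqrt (by linarith)
  unfold aicnStepSize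
  field_simp
  rw [mul_comm G 2]
  linear_combination hsq

lemma one_le_max_sqrt_two_mul_of_root (hα : 0 < α) (hroot : G / 2 * α ^ 2 + α = 1) :
    1 ≤ max √G 2 * α := by
  rcases le_total G 4 with hG4 | hG4
  · have hα_half : 1 / 2 ≤ α := by nlinarith [sq_nonneg α]
    nlinarith [le_max_right √G 2]
  · have hGα : 1 ≤ (√G * α) ^ 2 := by
      rw [mul_pow, Real.sq_sqrt (by linarith)]
      nlinarith
    have hsqrt : 1 ≤ √G * α := by
      nlinarith [mul_nonneg (Real.sqrt_nonneg G) hα.le]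
    nlinarith [le_max_left √G 2]

lemma one_div_two_mul_max_le_of_root (hG : 0 ≤ G) (hα : 0 < α)
    (hroot : G / 2 * α ^ 2 + α = 1) :
    1 / (2 * max √G 2) ≤ α * (1 - α / 2 - G / 6 * α ^ 2) := by
  have hα_le : α ≤ 1 := by nlinarith [mul_nonneg hG (sq_nonneg α)]
  have hM : 1 ≤ max √G 2 * α := one_le_max_sqrt_two_mul_of_root hα hroot
  have hM_pos : 0 < max √G 2 := lt_max_of_lt_right two_pos
  calc 1 / (2 * max √G 2) ≤ α / 2 := by
        rw [div_le_div_iff₀ (by positivity) two_pos]; linarith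
    _ ≤ α * (4 - α) / 6 := by nlinarith
    _ = α * (1 - α / 2 - G / 6 * α ^ 2) := by linear_combination (α / 3) * hroot

end StepSize

lemma sq_div_sqrt_mul {L g : ℝ} (hL : 0 ≤ L) (hg : 0 < g) :
    g ^ 2 / √(L * g) = g ^ ((3 : ℝ) / 2) / √L := by
  have hsplit : g ^ 2 = g ^ ((3 : ℝ) / 2) * √g := by
    rw [Real.sqrt_eq_rpow, ← Real.rpow_add hg, ← Real.rpow_natCast]
    norm_num
  rw [Real.sqrt_mul hL, hsplit, mul_div_mul_right _ _ (Real.sqrt_pos.mpr hg).ne']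

lemma sub_le_of_cubic_upper_bound {E : Type*}
    [NormedAddCommGroup E] [InnerProductSpace ℝ E]
    {f : E → ℝ} {H : E →L[ℝ] E} {x grad v : E} {L g α : ℝ}
    (hub : ∀ h, f (x + h) - f x ≤ ⟪grad, h⟫ + 1 / 2 * ⟪H h, h⟫ + L / 6 * √⟪H h, h⟫ ^ 3)
    (hv : H v = grad) (hg : ⟪grad, v⟫ = g ^ 2) (hg0 : 0 ≤ g) (hα : 0 ≤ α) :
    f (x - α • v) - f x ≤ -(α * g ^ 2) * (1 - α / 2 - L * g / 6 * α ^ 2) := by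
  have hgrad : ⟪grad, (-α) • v⟫ = -α * g ^ 2 := by rw [real_inner_smul_right, hg]
  have hquad : ⟪H ((-α) • v), (-α) • v⟫ = (α * g) ^ 2 := by
    rw [map_smul, real_inner_smul_left, real_inner_smul_right, hv, hg]; ring
  have hbound := hub ((-α) • v)
  rw [hgrad, hquad, Real.sqrt_sq (by positivity), neg_smul, ← sub_eq_add_neg] at hbound
  linarith

theorem aicn_one_step_decrease_general {d : ℕ}
    (f : EuclideanSpace ℝ (Fin d) → ℝ)
    (hess hessinv : EuclideanSpace ℝ (Fin d) →
      EuclideanSpace ℝ (Fin d) →L[ℝ] EuclideanSpace ℝ (Fin d))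
    (L : ℝ) (hL : 0 < L)
    (hinv : ∀ x, (hess x).comp (hessinv x) = ContinuousLinearMap.id ℝ _ ∧
      (hessinv x).comp (hess x) = ContinuousLinearMap.id ℝ _)
    -- cubic upper bound in local Hessian norms
    (hub : ∀ x h, f (x + h) - f x ≤ ⟪gradient f x, h⟫ + 1 / 2 * ⟪hess x h, h⟫ +
      L / 6 * Real.sqrt ⟪hess x h, h⟫ ^ 3)
    (x xplus : EuclideanSpace ℝ (Fin d)) (g G α : ℝ)
    (hg : g = Real.sqrt ⟪gradient f x, hessinv x (gradient f x)⟫)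
    (hgpos : 0 < g)
    (hG : G = L * g)
    (hα : α = (-1 + Real.sqrt (1 + 2 * G)) / G)
    (hxplus : xplus = x - α • hessinv x (gradient f x)) :
    f xplus - f x ≤ -(α * g ^ 2) * (1 - α / 2 - G / 6 * α ^ 2) ∧
      f xplus - f x ≤ -(1 / 2) * (g ^ 2 / max (Real.sqrt G) 2) ∧
      (g ≥ 4 / L → f xplus - f x ≤ -(g ^ ((3 : ℝ) / 2) / (2 * Real.sqrt L))) ∧
      (g ≤ 4 / L → f xplus - f x ≤ -(g ^ 2 / 4)) := by
  have hGpos : 0 < G := hG ▸ mul_pos hL hgpos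
  have hα_pos : 0 < α := hα ▸ aicnStepSize_pos hGpos
  have hroot : G / 2 * α ^ 2 + α = 1 := hα ▸ aicnStepSize_root hGpos
  have hnewton : hess x (hessinv x (gradient f x)) = gradient f x :=
    congr($((hinv x).1) (gradient f x))
  have hg2 : ⟪gradient f x, hessinv x (gradient f x)⟫ = g ^ 2 := by
    rw [hg, Real.sq_sqrt (Real.sqrt_pos.mp (hg ▸ hgpos)).le]
  have first := sub_le_of_cubic_upper_bound (hub x) hnewton hg2 hgpos.le hα_pos.le
  rw [← hxplus, ← hG] at first
  have second : f xplus - f x ≤ -(1 / 2) * (g ^ 2 / max √G 2) := by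
    have hfactor := mul_le_mul_of_nonneg_left
      (one_div_two_mul_max_le_of_root hGpos.le hα_pos hroot) (sq_nonneg g)
    calc f xplus - f x ≤ _ := first
      _ = -(g ^ 2 * (α * (1 - α / 2 - G / 6 * α ^ 2))) := by ring
      _ ≤ -(g ^ 2 * (1 / (2 * max √G 2))) := neg_le_neg hfactor
      _ = _ := by ring
  refine ⟨first, second, fun hgL ↦ ?_, fun hgL ↦ ?_⟩
  · have hG4 : 4 ≤ G := hG ▸ (div_le_iff₀' hL).mp hgL
    have hmax : max √G 2 = √G := max_eq_left (Real.le_sqrt_of_sq_le (by linarith))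
    rw [hmax, hG, sq_div_sqrt_mul hL.le hgpos] at second
    exact second.trans_eq (by ring)
  · have hG4 : G ≤ 4 := hG ▸ (le_div_iff₀' hL).mp hgL
    have hmax : max √G 2 = 2 := max_eq_right ((Real.sqrt_le_left zero_le_two).mpr (by linarith))
    rw [hmax] at second
    exact second.trans_eq (by ring)

theorem aicn_one_step_decrease {d : ℕ}
    (f : EuclideanSpace ℝ (Fin d) → ℝ)
    (hess hessinv : EuclideanSpace ℝ (Fin d) →
      EuclideanSpace ℝ (Fin d) →L[ℝ] EuclideanSpace ℝ (Fin d))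
    (L : ℝ) (hL : 0 < L)
    (hconv : ConvexOn ℝ Set.univ f)
    (hf : ContDiff ℝ 2 f)
    (hhess : ∀ x, HasFDerivAt (gradient f) (hess x) x)
    (hpd : ∀ x v, v ≠ 0 → 0 < ⟪hess x v, v⟫)
    (hinv : ∀ x, (hess x).comp (hessinv x) = ContinuousLinearMap.id ℝ _ ∧
      (hessinv x).comp (hess x) = ContinuousLinearMap.id ℝ _)
    -- cubic upper bound in local Hessian norms
    (hub : ∀ x h, f (x + h) - f x ≤ ⟪gradient f x, h⟫ + 1 / 2 * ⟪hess x h, h⟫ +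
      L / 6 * Real.sqrt ⟪hess x h, h⟫ ^ 3)
    (x xplus : EuclideanSpace ℝ (Fin d)) (g G α : ℝ)
    (hg : g = Real.sqrt ⟪gradient f x, hessinv x (gradient f x)⟫)
    (hgpos : 0 < g)
    (hG : G = L * g)
    (hα : α = (-1 + Real.sqrt (1 + 2 * G)) / G)
    (hxplus : xplus = x - α • hessinv x (gradient f x)) :
    f xplus - f x ≤ -(α * g ^ 2) * (1 - α / 2 - G / 6 * α ^ 2) ∧
      f xplus - f x ≤ -(1 / 2) * (g ^ 2 / max (Real.sqrt G) 2) ∧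
      (g ≥ 4 / L → f xplus - f x ≤ -(g ^ ((3 : ℝ) / 2) / (2 * Real.sqrt L))) ∧
      (g ≤ 4 / L → f xplus - f x ≤ -(g ^ 2 / 4)) :=
  aicn_one_step_decrease_general f hess hessinv L hL hinv hub x xplus g G α hg hgpos hG hα hxplus
end

section
/- Let {β_k} be a sequence of reals with 0 ≤ β_k ≤ 1 satisfying β_{k+1} ≤ β_k − β_k^{3/2} for all k ≥ 0. Then β_k = O(1/k²); concretely there is a universal constant c (e.g., c = 9) such that β_k ≤ c/k² for all k ≥ 1. -/
set_option maxHeartbeats 1000000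

private lemma rpow32 (x : ℝ) (hx : 0 ≤ x) :
    x ^ ((3 : ℝ) / 2) = (Real.sqrt x) ^ 3 := by
  rw [show ((3:ℝ)/2) = (1/2 : ℝ) * (3:ℕ) by norm_num, Real.rpow_mul hx,
    Real.rpow_natCast, ← Real.sqrt_eq_rpow]

private lemma mono_g {a b : ℝ} (ha : 0 ≤ a) (hab : a ≤ b) (hb : b ≤ 2/3) :
    a^2 - a^3 ≤ b^2 - b^3 := by
  nlinarith [sq_nonneg (a+b), sq_nonneg (a-b), mul_nonneg ha (sub_nonneg.2 hab)]

theorem beta_recursion_rate (β : ℕ → ℝ)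
    (hβ : ∀ k, 0 ≤ β k ∧ β k ≤ 1)
    (hrec : ∀ k, β (k + 1) ≤ β k - β k ^ ((3 : ℝ) / 2)) :
    ∀ k : ℕ, 1 ≤ k → β k ≤ 9 / (k : ℝ) ^ 2 := by
  -- step bound via sqrt
  have step : ∀ k, β (k+1) ≤ (Real.sqrt (β k))^2 - (Real.sqrt (β k))^3 := by
    intro k
    have h := hrec k
    rw [rpow32 _ (hβ k).1] at h
    rwa [Real.sq_sqrt (hβ k).1]
  have inv : ∀ k : ℕ, 1 ≤ k → β k ≤ 4/27 ∧ β k ≤ 9 / ((k:ℝ)+3)^2 := by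
    intro k hk
    induction k, hk using Nat.le_induction with
    | base =>
      have s0 := Real.sqrt_nonneg (β 0)
      have s1 : Real.sqrt (β 0) ≤ 1 := Real.sqrt_le_one.2 (hβ 0).2
      have h := step 0
      constructor
      · nlinarith [sq_nonneg (3 * Real.sqrt (β 0) - 2)]
      · nlinarith [sq_nonneg (3 * Real.sqrt (β 0) - 2)]
    | succ k hk ih =>
      obtain ⟨ih1, ih2⟩ := ih
      set t := Real.sqrt (β k) with ht
      have t0 : 0 ≤ t := Real.sqrt_nonneg _
      have ht2 : t^2 = β k := Real.sq_sqrt (hβ k).1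
      have h := step k
      have hfirst : β (k+1) ≤ 4/27 := by
        have t1 : t ≤ 1 := Real.sqrt_le_one.2 (hβ k).2
        nlinarith [sq_nonneg (3*t - 2)]
      refine ⟨hfirst, ?_⟩
      have hn : (4:ℝ) ≤ (k:ℝ)+3 := by
        have : (1:ℝ) ≤ (k:ℝ) := by exact_mod_cast hk
        linarith
      set n : ℝ := (k:ℝ)+3 with hnd
      have hnpos : 0 < n := by linarith
      have hcast : ((k:ℝ)+1)+3 = n+1 := by ring
      push_cast
      rw [hcast]
      have ih2' : t^2 * n^2 ≤ 9 := by
        have := (le_div_iff₀ (by positivity : (0:ℝ) < n^2)).1 (ht2 ▸ ih2)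
        linarith
      by_cases hc : 9 / n^2 ≤ 4/27
      · -- t ≤ 3/n ≤ 2/3
        have hc' : (243:ℝ) ≤ 4 * n^2 := by
          rw [div_le_div_iff₀ (by positivity) (by norm_num)] at hc
          linarith
        have htn : t ≤ 3/n := by
          rw [le_div_iff₀ hnpos]
          nlinarith [mul_nonneg t0 hnpos.le, sq_nonneg (t*n - 3)]
        have hn2 : (9:ℝ)/2 ≤ n := by nlinarith
        have h3n : (3:ℝ)/n ≤ 2/3 := by
          rw [div_le_div_iff₀ hnpos (by norm_num)]; linarith
        have hmono := mono_g t0 htn h3n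
        have hpoly : (9*n - 27) * (n+1)^2 ≤ 9 * n^3 := by nlinarith
        have heq : (3/n)^2 - (3/n)^3 = (9*n - 27)/n^3 := by
          field_simp; ring
        have hfin : (9*n - 27)/n^3 ≤ 9/(n+1)^2 := by
          rw [div_le_div_iff₀ (by positivity) (by positivity)]
          nlinarith
        calc β (k+1) ≤ t^2 - t^3 := h
          _ ≤ (3/n)^2 - (3/n)^3 := hmono
          _ = (9*n - 27)/n^3 := heq
          _ ≤ 9/(n+1)^2 := hfin
      · -- n ≤ 7, so 9/(n+1)^2 ≥ 9/64, and t^2 - t^3 ≤ 9/64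
        push_neg at hc
        have hc' : n^2 * 4 < 9 * 27 := by
          rw [div_lt_div_iff₀ (by norm_num) (by positivity)] at hc
          linarith
        have hn7 : n ≤ 8 := by nlinarith
        have hsmall : t^2 - t^3 ≤ 9/81 := by
          nlinarith [ih1, sq_nonneg t, mul_nonneg (mul_nonneg t0 t0) t0,
            sq_nonneg (t - 1/3), mul_nonneg t0 (sq_nonneg (t - 1/3))]
        have hbig : (9:ℝ)/81 ≤ 9/(n+1)^2 := by
          rw [div_le_div_iff₀ (by norm_num) (by positivity)]
          nlinarith
        linarith [step k]
      done
  intro k hk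
  have h1 := (inv k hk).2
  have hk1 : (1:ℝ) ≤ (k:ℝ) := by exact_mod_cast hk
  have : 9 / ((k:ℝ)+3)^2 ≤ 9 / (k:ℝ)^2 := by
    apply div_le_div_of_nonneg_left (by norm_num) (by positivity)
    nlinarith
  linarith
end
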